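/- arXiv:2405.15466 — 2 statements merged into one kernel-verified Lean document; each statement's English description precedes it below -/
import Mathlib

section
/- Let K be a field, G a finite group whose order is invertible in K, and A a strictly unital A∞-category over K with a strict G-action (a group homomorphism from G into strictly unital strict invertible A∞-endofunctors of A). Then the skew-group construction A*G — with objects {X} for X ∈ Obj(A), morphism spaces Hom({X},{Y}) = ⊕_{g∈G} Hom_A(gX, Y), and higher multiplications μⁿ(aₙ⊗gₙ, …, a₁⊗g₁) = μⁿ_A(aₙ, gₙ·aₙ₋₁, gₙgₙ₋₁·aₙ₋₂, …, gₙ⋯g₂·a₁) ⊗ gₙ⋯g₁ — is again a strictly unital A∞-category; in particular its multiplications satisfy the Stasheff relations and the elements 1_X ⊗ 1_G are strict units. -/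
/-!
STATEMENT 0: The skew-group construction `A * G` of a strictly unital A∞-category `A`
with a strict action of a finite group `G` (whose order is invertible in the base field `K`)
is again a strictly unital A∞-category.

We model a (strictly unital) A∞-category by:
* a type of objects;
* one total `K`-module `M` of morphisms, together with submodules `hom X Y` (the morphism
  space from `X` to `Y`) and `grade d` (the degree-`d` homogeneous part);
* higher multiplications `mu n : (Fin n → M) → M` (slot `0` is the first morphism applied,
  i.e. `mu n ![a₁, a₂, …, aₙ]` is the paper's `μⁿ(aₙ, …, a₁)`);
* strict units `unit X`.

The predicate `IsAInfty` asserts multilinearity of all `mu n`, compatibility with the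
hom-decomposition and the grading (degree `2 - n`), the Stasheff relations (for tuples of
homogeneous composable morphisms, with the signs `(-1)^{∑_{i ≤ k} ‖aᵢ‖}`), and the strict
unitality axioms.

`skewGroup K G A σ` is the skew-group A∞-category: it has the same objects (the symbols
`{X}`), morphism module `G → A.M` where the component at `g` of a morphism `{X} → {Y}`
lies in `Hom_A(gX, Y)` (so `Hom({X},{Y}) = ⊕_{g ∈ G} Hom_A(gX,Y)`), multiplication
`μⁿ(aₙ⊗gₙ, …, a₁⊗g₁) = μⁿ_A(aₙ, gₙ·aₙ₋₁, gₙgₙ₋₁·aₙ₋₂, …, gₙ⋯g₂·a₁) ⊗ gₙ⋯g₁`,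
and units `1_X ⊗ 1_G`.
-/

set_option autoImplicit false

universe u v

/-- Data of an A∞-category over `K`. -/
structure AInftyData (K : Type) [Field K] where
  Obj : Type
  M : Type
  [addCommGroupM : AddCommGroup M]
  [moduleM : Module K M]
  hom : Obj → Obj → Submodule K M
  grade : ℤ → Submodule K M
  mu : (n : ℕ) → (Fin n → M) → M
  unit : Obj → M

attribute [instance] AInftyData.addCommGroupM AInftyData.moduleM

namespace AInftyData

variable {K : Type} [Field K]

/-- The axioms of a strictly unital A∞-category. -/
structure IsAInfty (A : AInftyData K) : Prop where
  /-- Additivity of `μⁿ` in each slot. -/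
  mu_add : ∀ (n : ℕ) (a : Fin n → A.M) (i : Fin n) (x y : A.M),
    A.mu n (Function.update a i (x + y)) =
      A.mu n (Function.update a i x) + A.mu n (Function.update a i y)
  /-- `K`-homogeneity of `μⁿ` in each slot. -/
  mu_smul : ∀ (n : ℕ) (a : Fin n → A.M) (i : Fin n) (c : K) (x : A.M),
    A.mu n (Function.update a i (c • x)) = c • A.mu n (Function.update a i x)
  /-- `μⁿ` maps composable chains `X₀ → X₁ → ⋯ → Xₙ` to `Hom(X₀, Xₙ)`. -/
  mu_hom : ∀ (n : ℕ) (X : Fin (n + 1) → A.Obj) (a : Fin n → A.M),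
    (∀ i : Fin n, a i ∈ A.hom (X i.castSucc) (X i.succ)) →
    A.mu n a ∈ A.hom (X 0) (X (Fin.last n))
  /-- `μⁿ` has degree `2 - n`. -/
  mu_grade : ∀ (n : ℕ) (d : Fin n → ℤ) (a : Fin n → A.M),
    (∀ i : Fin n, a i ∈ A.grade (d i)) →
    A.mu n a ∈ A.grade ((∑ i, d i) + 2 - n)
  /-- The Stasheff relations, for every tuple of composable homogeneous morphisms:
  `∑_{k+j≤n, j≥1} (-1)^{∑_{i<k} ‖aᵢ‖} μ^{n-j+1}(aₙ,…,a_{k+j+1}, μʲ(a_{k+j},…,a_{k+1}), a_k,…,a₁) = 0`. -/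
  stasheff : ∀ (n : ℕ) (X : Fin (n + 1) → A.Obj) (d : Fin n → ℤ) (a : Fin n → A.M),
    (∀ i : Fin n, a i ∈ A.hom (X i.castSucc) (X i.succ) ⊓ A.grade (d i)) →
    (∑ k ∈ Finset.range (n + 1), ∑ j ∈ Finset.range (n + 1),
      if h : 1 ≤ j ∧ k + j ≤ n then
        ((-1 : K) ^ (∑ i : Fin n, if (i : ℕ) < k then d i - 1 else 0)) •
          A.mu (n - j + 1) (fun i : Fin (n - j + 1) =>
            if hik : (i : ℕ) < k then a ⟨(i : ℕ), by omega⟩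
            else if (i : ℕ) = k then
              A.mu j (fun t : Fin j => a ⟨k + (t : ℕ), by have ht := t.isLt; omega⟩)
            else a ⟨(i : ℕ) + j - 1, by have := i.isLt; omega⟩)
      else 0) = 0
  /-- The unit `1_X` lies in `Hom(X,X)` and has degree `0`. -/
  unit_mem : ∀ X : A.Obj, A.unit X ∈ A.hom X X ⊓ A.grade 0
  /-- `μ¹(1_X) = 0`. -/
  mu_one_unit : ∀ X : A.Obj, A.mu 1 ![A.unit X] = 0
  /-- `μ²(a, 1_X) = a`. -/
  mu_two_unit_right : ∀ (X Y : A.Obj) (a : A.M), a ∈ A.hom X Y →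
    A.mu 2 ![A.unit X, a] = a
  /-- `μ²(1_Y, a) = (-1)^{|a|} a`. -/
  mu_two_unit_left : ∀ (X Y : A.Obj) (d : ℤ) (a : A.M),
    a ∈ A.hom X Y ⊓ A.grade d → A.mu 2 ![a, A.unit Y] = ((-1 : K) ^ d) • a
  /-- `μⁿ` vanishes on units for `n ≥ 3`. -/
  mu_unit_vanish : ∀ (n : ℕ), 3 ≤ n → ∀ (a : Fin n → A.M) (i : Fin n) (X : A.Obj),
    a i = A.unit X → A.mu n a = 0

end AInftyData

/-- A strict action of a group `G` on an A∞-category `A` by strictly unital strict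
invertible A∞-functors. -/
structure StrictAction (K : Type) [Field K] (G : Type) [Group G] (A : AInftyData K) where
  obj : G → A.Obj → A.Obj
  map : G → A.M →ₗ[K] A.M
  obj_one : ∀ X, obj 1 X = X
  obj_mul : ∀ g h X, obj (g * h) X = obj g (obj h X)
  map_one : map 1 = LinearMap.id
  map_mul : ∀ g h, map (g * h) = (map g).comp (map h)
  map_hom : ∀ (g : G) (X Y : A.Obj) (a : A.M), a ∈ A.hom X Y →
    map g a ∈ A.hom (obj g X) (obj g Y)
  map_grade : ∀ (g : G) (d : ℤ) (a : A.M), a ∈ A.grade d → map g a ∈ A.grade d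
  map_mu : ∀ (g : G) (n : ℕ) (a : Fin n → A.M),
    map g (A.mu n a) = A.mu n (fun i => map g (a i))
  map_unit : ∀ (g : G) (X : A.Obj), map g (A.unit X) = A.unit (obj g X)

section SkewGroup

variable (K : Type) [Field K] (G : Type) [Group G] [Fintype G] [DecidableEq G]

/-- The ordered product `gₙ ⋯ g₁` (slot `0` of the tuple is `g₁`). -/
def ordProd {n : ℕ} (g : Fin n → G) : G := ((List.ofFn g).reverse).prod

/-- The partial product `gₙ ⋯ g_{i+2}` acting on the morphism in slot `i`. -/
def suffixProd {n : ℕ} (g : Fin n → G) (i : Fin n) : G :=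
  (((List.ofFn g).drop ((i : ℕ) + 1)).reverse).prod

/-- The skew-group A∞-category `A * G`:  objects are the symbols `{X}` for `X ∈ Obj A`,
`Hom({X},{Y}) = ⊕_{g ∈ G} Hom_A(gX, Y)` and
`μⁿ(aₙ⊗gₙ, …, a₁⊗g₁) = μⁿ_A(aₙ, gₙ·aₙ₋₁, …, gₙ⋯g₂·a₁) ⊗ gₙ⋯g₁`. -/
@[reducible] def skewGroup (A : AInftyData K) (σ : StrictAction K G A) : AInftyData K where
  Obj := A.Obj
  M := G → A.M
  hom X Y := Submodule.pi Set.univ (fun g => A.hom (σ.obj g X) Y)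
  grade d := Submodule.pi Set.univ (fun _ => A.grade d)
  mu n f := fun h => ∑ g : Fin n → G,
    if ordProd G g = h then
      A.mu n (fun i => σ.map (suffixProd G g i) (f i (g i)))
    else 0
  unit X := fun g => if g = 1 then A.unit X else 0

end SkewGroup

/-!
For a tuple of group labels `g = (g₁, …, gₙ)`, the gₙ⋯g₁-component of `μⁿ(aₙ⊗gₙ, …, a₁⊗g₁)` is
`μⁿ_A` applied to the twisted tuple `(gₙ⋯g₂·a₁(g₁), …, gₙ·aₙ₋₁(gₙ₋₁), aₙ(gₙ))`, which is a
composable chain in `A` because `G` acts by strict functors. In a Stasheff term of `A * G`, the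
inner `μʲ` is a sum over labels `g'` of its inputs with product equal to the outer label `c_k` in
its slot; expanding it by multilinearity and using `g·μʲ_A(…) = μʲ_A(g·…)`, each pair `(c, g')`
merges into one tuple of labels for all `n` inputs, and every tuple arises exactly once. Hence the
`h`-component of the Stasheff sum of `A * G` is the sum, over tuples with product `h`, of Stasheff
sums of twisted tuples in `A`, each of which vanishes. Strict unitality holds componentwise, since
`1_X ⊗ 1_G` only contributes through the label `1`.
-/

open Finset

section TupleSurgery

variable {α : Type} {n k j : ℕ}

def block (k j : ℕ) (hkj : k + j ≤ n) (g : Fin n → α) : Fin j → α :=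
  fun t => g ⟨k + t, by omega⟩

def splice (k j : ℕ) (hkj : k + j ≤ n) (c : Fin (n - j + 1) → α) (g' : Fin j → α) :
    Fin n → α :=
  fun i => if h : (i : ℕ) < k then c ⟨i, by omega⟩
    else if h' : (i : ℕ) < k + j then g' ⟨i - k, by omega⟩
    else c ⟨i - j + 1, by omega⟩

lemma block_splice (hkj : k + j ≤ n) (c : Fin (n - j + 1) → α) (g' : Fin j → α) :
    block k j hkj (splice k j hkj c g') = g' := by
  funext t
  simp only [block, splice]
  split_ifs <;> first | (congr 1; ext; (try simp only); omega) | omega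

end TupleSurgery

section TupleProducts

variable {G : Type} [Group G]

/-- `g_{n-1} ⋯ g_{s+1} g_s` (slots counted from `0`), which is `1` for `s ≥ n`. -/
def tailProd {n : ℕ} (g : Fin n → G) (s : ℕ) : G := (((List.ofFn g).drop s).reverse).prod

lemma tailProd_of_le {n : ℕ} (g : Fin n → G) {s : ℕ} (h : n ≤ s) : tailProd g s = 1 := by
  rw [tailProd, List.drop_eq_nil_of_le (by simpa using h)]
  simp

lemma tailProd_of_lt {n : ℕ} (g : Fin n → G) {s : ℕ} (h : s < n) :
    tailProd g s = tailProd g (s + 1) * g ⟨s, h⟩ := by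
  rw [tailProd, List.drop_eq_getElem_cons (by simpa using h), List.reverse_cons, List.prod_append]
  simp [tailProd]

lemma ordProd_eq_tailProd {n : ℕ} (g : Fin n → G) : ordProd G g = tailProd g 0 := rfl

lemma suffixProd_eq_tailProd {n : ℕ} (g : Fin n → G) (i : Fin n) :
    suffixProd G g i = tailProd g (i + 1) := rfl

lemma suffixProd_mul_self {n : ℕ} (g : Fin n → G) (i : Fin n) :
    suffixProd G g i * g i = tailProd g i := by
  rw [suffixProd_eq_tailProd, tailProd_of_lt g i.isLt]

lemma ordProd_fin_two (g : Fin 2 → G) : ordProd G g = g 1 * g 0 := by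
  simp [ordProd, List.ofFn_succ]

variable {n k j : ℕ}

/-- Replaces the block of `j` labels starting at slot `k` by its ordered product: these are the
labels of the `(k, j)` term of a Stasheff relation. -/
def contract (k j : ℕ) (hkj : k + j ≤ n) (g : Fin n → G) : Fin (n - j + 1) → G :=
  fun i => if h : (i : ℕ) < k then g ⟨i, by omega⟩
    else if h' : (i : ℕ) = k then ordProd G (block k j hkj g)
    else g ⟨i + j - 1, by omega⟩

variable (hkj : k + j ≤ n)

lemma tailProd_block (g : Fin n → G) {t : ℕ} (ht : t ≤ j) :
    tailProd g (k + t) = tailProd g (k + j) * tailProd (block k j hkj g) t := by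
  induction ht using Nat.decreasingInduction with
  | self => rw [tailProd_of_le _ le_rfl, mul_one]
  | of_succ t ht ih =>
    rw [tailProd_of_lt g (by omega), tailProd_of_lt _ ht, ← mul_assoc, ← ih]
    rfl

lemma tailProd_contract_of_lt (g : Fin n → G) {s : ℕ} (hks : k < s) :
    tailProd (contract k j hkj g) s = tailProd g (s + j - 1) := by
  obtain hs | hs := le_or_gt (n - j + 1) s
  · rw [tailProd_of_le _ hs, tailProd_of_le _ (by omega)]
  replace hs := hs.le
  induction hs using Nat.decreasingInduction with
  | self => rw [tailProd_of_le _ le_rfl, tailProd_of_le _ (by omega)]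
  | of_succ s hs ih =>
    rw [tailProd_of_lt _ hs, tailProd_of_lt g (by omega), ih (by omega),
      show s + 1 + j - 1 = s + j - 1 + 1 by omega]
    simp only [contract, dif_neg (show ¬ s < k by omega), dif_neg (show s ≠ k by omega)]

lemma tailProd_contract_of_le (g : Fin n → G) {s : ℕ} (hsk : s ≤ k) :
    tailProd (contract k j hkj g) s = tailProd g s := by
  induction hsk using Nat.decreasingInduction with
  | self =>
    have hk := tailProd_block hkj g (Nat.zero_le j)
    rw [add_zero] at hk
    rw [tailProd_of_lt _ (by omega), tailProd_contract_of_lt hkj g (Nat.lt_succ_self k), hk,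
      show k + 1 + j - 1 = k + j by omega]
    simp only [contract, lt_irrefl, dite_false, dite_true]
    rfl
  | of_succ s hs ih =>
    rw [tailProd_of_lt _ (by omega), tailProd_of_lt g (by omega), ih]
    simp only [contract, dif_pos hs]

lemma suffixProd_contract_mul_suffixProd_block (g : Fin n → G) (t : Fin j) :
    suffixProd G (contract k j hkj g) ⟨k, by omega⟩ * suffixProd G (block k j hkj g) t =
      suffixProd G g ⟨k + t, by omega⟩ := by
  simp only [suffixProd_eq_tailProd]
  rw [tailProd_contract_of_lt hkj g (Nat.lt_succ_self k), show k + 1 + j - 1 = k + j by omega,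
    add_assoc, tailProd_block hkj g t.isLt]

lemma ordProd_contract (g : Fin n → G) : ordProd G (contract k j hkj g) = ordProd G g :=
  tailProd_contract_of_le hkj g (Nat.zero_le k)

lemma splice_contract_block (g : Fin n → G) :
    splice k j hkj (contract k j hkj g) (block k j hkj g) = g := by
  funext i
  simp only [splice, contract, block]
  split_ifs <;> first | rfl | (congr 1; ext; (try simp only); omega) | omega

lemma contract_splice (c : Fin (n - j + 1) → G) (g' : Fin j → G)
    (hc : c ⟨k, by omega⟩ = ordProd G g') : contract k j hkj (splice k j hkj c g') = c := by
  funext i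
  by_cases hik : (i : ℕ) = k
  · simp only [contract, hik, lt_irrefl, dite_false, dite_true, block_splice, ← hc]
    congr 1
    ext
    exact hik.symm
  simp only [contract, splice]
  split_ifs <;> first | rfl | (congr 1; ext; (try simp only); omega) | omega

lemma sum_fiber_contract [Fintype G] [DecidableEq G] {M : Type} [AddCommMonoid M]
    (c : Fin (n - j + 1) → G) (F : (Fin n → G) → M) :
    ∑ g ∈ univ with contract k j hkj g = c, F g =
      ∑ g' ∈ univ with ordProd G g' = c ⟨k, by omega⟩, F (splice k j hkj c g') := by
  refine sum_nbij' (block k j hkj) (splice k j hkj c) ?_ ?_ ?_ ?_ ?_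
  · rintro g hg
    simp only [mem_filter, mem_univ, true_and] at hg ⊢
    rw [← hg]
    simp [contract]
  · rintro g' hg'
    simp only [mem_filter, mem_univ, true_and] at hg' ⊢
    exact contract_splice hkj c g' hg'.symm
  · rintro g hg
    simp only [mem_filter, mem_univ, true_and] at hg
    rw [← hg, splice_contract_block]
  · intro g' _
    exact block_splice hkj c g'
  · rintro g hg
    simp only [mem_filter, mem_univ, true_and] at hg
    rw [← hg, splice_contract_block]

end TupleProducts

namespace AInftyData

variable {K : Type} [Field K] {A : AInftyData K}

def IsAInfty.muMultilinear (hA : A.IsAInfty) (n : ℕ) :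
    MultilinearMap K (fun _ : Fin n => A.M) A.M where
  toFun := A.mu n
  map_update_add' a i x y := by convert hA.mu_add n a i x y
  map_update_smul' a i c x := by convert hA.mu_smul n a i c x

@[simp]
lemma IsAInfty.muMultilinear_apply (hA : A.IsAInfty) {n : ℕ} (a : Fin n → A.M) :
    hA.muMultilinear n a = A.mu n a := rfl

lemma IsAInfty.mu_eq_zero_of_eq_unit (hA : A.IsAInfty) {n : ℕ} (hn : n ≠ 2) (a : Fin n → A.M)
    (i : Fin n) (X : A.Obj) (hi : a i = A.unit X) : A.mu n a = 0 := by
  obtain _ | _ | _ | n := n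
  · exact i.elim0
  · rw [show a = ![A.unit X] by
      funext l; rw [Matrix.cons_val_fin_one, ← hi, Subsingleton.elim (α := Fin 1) l i]]
    exact hA.mu_one_unit X
  · exact absurd rfl hn
  · exact hA.mu_unit_vanish _ (by omega) a i X hi

/-- The arguments `(a₁, …, a_k, μʲ(a_{k+1}, …, a_{k+j}), a_{k+j+1}, …, aₙ)` of the `(k, j)` term
of the Stasheff relations, slot `0` first. -/
def insertMu (B : AInftyData K) {n : ℕ} (k j : ℕ) (hkj : k + j ≤ n) (a : Fin n → B.M) :
    Fin (n - j + 1) → B.M :=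
  fun i => if hik : (i : ℕ) < k then a ⟨i, by omega⟩
    else if hik' : (i : ℕ) = k then B.mu j (fun t => a ⟨k + t, by omega⟩)
    else a ⟨i + j - 1, by omega⟩

section InsertMu

variable (B : AInftyData K) {n k j : ℕ} (hkj : k + j ≤ n) (a : Fin n → B.M)

lemma insertMu_of_lt (i : Fin (n - j + 1)) (hi : (i : ℕ) < k) :
    B.insertMu k j hkj a i = a ⟨i, by omega⟩ := dif_pos hi

lemma insertMu_self : B.insertMu k j hkj a ⟨k, by omega⟩ = B.mu j (block k j hkj a) := by
  simp [insertMu]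
  rfl

lemma insertMu_of_gt (i : Fin (n - j + 1)) (hi : k < (i : ℕ)) :
    B.insertMu k j hkj a i = a ⟨i + j - 1, by omega⟩ := by
  simp [insertMu, hi.ne', hi.not_gt]

end InsertMu

def stasheffSum (B : AInftyData K) (n : ℕ) (d : Fin n → ℤ) (a : Fin n → B.M) : B.M :=
  ∑ k ∈ range (n + 1), ∑ j ∈ range (n + 1),
    if h : 1 ≤ j ∧ k + j ≤ n then
      ((-1 : K) ^ (∑ i : Fin n, if (i : ℕ) < k then d i - 1 else 0)) •
        B.mu (n - j + 1) (B.insertMu k j h.2 a)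
    else 0

lemma IsAInfty.stasheffSum_eq_zero (hA : A.IsAInfty) {n : ℕ} (X : Fin (n + 1) → A.Obj)
    (d : Fin n → ℤ) (a : Fin n → A.M)
    (ha : ∀ i : Fin n, a i ∈ A.hom (X i.castSucc) (X i.succ) ⊓ A.grade (d i)) :
    A.stasheffSum n d a = 0 :=
  hA.stasheff n X d a ha

end AInftyData

section SkewGroup

open AInftyData

variable {K : Type} [Field K] {G : Type} [Group G] {A : AInftyData K} (σ : StrictAction K G A)

/-- The tuple `(gₙ⋯g₂ · a₁(g₁), …, gₙ · aₙ₋₁(gₙ₋₁), aₙ(gₙ))` to which `μⁿ_A` is applied in the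
`gₙ⋯g₁`-component of `μⁿ(aₙ, …, a₁)` in `A * G`. -/
def twist {n : ℕ} (g : Fin n → G) (a : Fin n → G → A.M) : Fin n → A.M :=
  fun i => σ.map (suffixProd G g i) (a i (g i))

lemma twist_fin_two (g : Fin 2 → G) (b c : G → A.M) :
    twist σ g ![b, c] = ![σ.map (g 1) (b (g 0)), c (g 1)] := by
  funext i
  fin_cases i <;> simp [twist, suffixProd, List.ofFn_succ, σ.map_one]

lemma map_mu_twist_block {n k j : ℕ} (hkj : k + j ≤ n) (a : Fin n → G → A.M) (g : Fin n → G) :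
    σ.map (suffixProd G (contract k j hkj g) ⟨k, by omega⟩)
        (A.mu j (twist σ (block k j hkj g) (block k j hkj a))) =
      A.insertMu k j hkj (twist σ g a) ⟨k, by omega⟩ := by
  rw [insertMu_self, σ.map_mu]
  congr 1
  funext t
  rw [twist, ← LinearMap.comp_apply, ← σ.map_mul, suffixProd_contract_mul_suffixProd_block]
  rfl

variable [Fintype G] [DecidableEq G]

lemma skewGroup_mu_apply {n : ℕ} (a : Fin n → G → A.M) (h : G) :
    (skewGroup K G A σ).mu n a h = ∑ g ∈ univ with ordProd G g = h, A.mu n (twist σ g a) := by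
  rw [sum_filter]
  rfl

def skewMuMultilinear (hA : A.IsAInfty) (n : ℕ) :
    MultilinearMap K (fun _ : Fin n => G → A.M) (G → A.M) :=
  MultilinearMap.pi fun h => ∑ g ∈ univ with ordProd G g = h,
    (hA.muMultilinear n).compLinearMap fun i => σ.map (suffixProd G g i) ∘ₗ LinearMap.proj (g i)

lemma coe_skewMuMultilinear (hA : A.IsAInfty) (n : ℕ) :
    ⇑(skewMuMultilinear σ hA n) = (skewGroup K G A σ).mu n := by
  funext a h
  rw [skewGroup_mu_apply]
  simp [skewMuMultilinear]
  rfl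

lemma skewGroup_mu_add (hA : A.IsAInfty) (n : ℕ) (a : Fin n → G → A.M) (i : Fin n)
    (x y : G → A.M) :
    (skewGroup K G A σ).mu n (Function.update a i (x + y)) =
      (skewGroup K G A σ).mu n (Function.update a i x) +
        (skewGroup K G A σ).mu n (Function.update a i y) := by
  simpa only [coe_skewMuMultilinear] using (skewMuMultilinear σ hA n).map_update_add a i x y

lemma skewGroup_mu_smul (hA : A.IsAInfty) (n : ℕ) (a : Fin n → G → A.M) (i : Fin n) (c : K)
    (x : G → A.M) :
    (skewGroup K G A σ).mu n (Function.update a i (c • x)) =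
      c • (skewGroup K G A σ).mu n (Function.update a i x) := by
  simpa only [coe_skewMuMultilinear] using (skewMuMultilinear σ hA n).map_update_smul a i c x

lemma twist_mem_hom {n : ℕ} (X : Fin (n + 1) → A.Obj) (a : Fin n → G → A.M)
    (ha : ∀ i : Fin n, a i ∈ (skewGroup K G A σ).hom (X i.castSucc) (X i.succ))
    (g : Fin n → G) (i : Fin n) :
    twist σ g a i ∈ A.hom (σ.obj (tailProd g i) (X i.castSucc))
      (σ.obj (tailProd g (i + 1)) (X i.succ)) := by
  have hmem := σ.map_hom (suffixProd G g i) _ _ _ ((Submodule.mem_pi.1 (ha i)) (g i) trivial)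
  rwa [← σ.obj_mul, suffixProd_mul_self] at hmem

lemma skewGroup_mu_hom (hA : A.IsAInfty) (n : ℕ) (X : Fin (n + 1) → A.Obj)
    (a : Fin n → G → A.M)
    (ha : ∀ i : Fin n, a i ∈ (skewGroup K G A σ).hom (X i.castSucc) (X i.succ)) :
    (skewGroup K G A σ).mu n a ∈ (skewGroup K G A σ).hom (X 0) (X (Fin.last n)) := by
  refine Submodule.mem_pi.2 fun h _ => ?_
  rw [skewGroup_mu_apply]
  refine Submodule.sum_mem _ fun g hg => ?_
  have hmem := hA.mu_hom n (fun l => σ.obj (tailProd g l) (X l)) _ (twist_mem_hom σ X a ha g)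
  rwa [Fin.val_zero, ← ordProd_eq_tailProd, (mem_filter.1 hg).2, Fin.val_last,
    tailProd_of_le g le_rfl, σ.obj_one] at hmem

lemma skewGroup_mu_grade (hA : A.IsAInfty) (n : ℕ) (d : Fin n → ℤ) (a : Fin n → G → A.M)
    (ha : ∀ i : Fin n, a i ∈ (skewGroup K G A σ).grade (d i)) :
    (skewGroup K G A σ).mu n a ∈ (skewGroup K G A σ).grade ((∑ i, d i) + 2 - n) := by
  refine Submodule.mem_pi.2 fun h _ => ?_
  rw [skewGroup_mu_apply]
  exact Submodule.sum_mem _ fun g _ => hA.mu_grade n d _ fun i =>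
    σ.map_grade _ _ _ (Submodule.mem_pi.1 (ha i) (g i) trivial)

section StasheffTerm

variable {n k j : ℕ} (hkj : k + j ≤ n) (a : Fin n → G → A.M)

lemma twist_contract_insertMu_of_ne (g : Fin n → G) (i : Fin (n - j + 1)) (hi : (i : ℕ) ≠ k) :
    twist σ (contract k j hkj g) ((skewGroup K G A σ).insertMu k j hkj a) i =
      A.insertMu k j hkj (twist σ g a) i := by
  obtain hik | hik := Nat.lt_or_gt_of_ne hi
  · rw [insertMu_of_lt _ _ _ _ hik, twist, insertMu_of_lt _ _ _ _ hik, twist,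
      suffixProd_eq_tailProd, suffixProd_eq_tailProd, tailProd_contract_of_le hkj g hik]
    simp only [contract, dif_pos hik]
  · rw [insertMu_of_gt _ _ _ _ hik, twist, insertMu_of_gt _ _ _ _ hik, twist,
      suffixProd_eq_tailProd, suffixProd_eq_tailProd,
      tailProd_contract_of_lt hkj g (Nat.lt_succ_of_lt hik),
      show (i : ℕ) + 1 + j - 1 = i + j - 1 + 1 by omega]
    simp only [contract, dif_neg hik.not_gt, dif_neg hi]

lemma twist_insertMu_self (c : Fin (n - j + 1) → G) :
    twist σ c ((skewGroup K G A σ).insertMu k j hkj a) ⟨k, by omega⟩ =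
      ∑ g ∈ univ with contract k j hkj g = c, A.insertMu k j hkj (twist σ g a) ⟨k, by omega⟩ := by
  rw [twist, insertMu_self, skewGroup_mu_apply, map_sum, sum_fiber_contract]
  refine sum_congr rfl fun g' hg' => ?_
  have hc := contract_splice hkj c g' (mem_filter.1 hg').2.symm
  have key := map_mu_twist_block σ hkj a (splice k j hkj c g')
  rwa [hc, block_splice] at key

lemma mu_twist_insertMu (hA : A.IsAInfty) (c : Fin (n - j + 1) → G) :
    A.mu (n - j + 1) (twist σ c ((skewGroup K G A σ).insertMu k j hkj a)) =
      ∑ g ∈ univ with contract k j hkj g = c,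
        A.mu (n - j + 1) (A.insertMu k j hkj (twist σ g a)) := by
  rw [← Function.update_eq_self ⟨k, by omega⟩ (twist σ c _), twist_insertMu_self,
    ← hA.muMultilinear_apply, MultilinearMap.map_update_sum]
  refine sum_congr rfl fun g hg => ?_
  rw [← (mem_filter.1 hg).2, hA.muMultilinear_apply]
  congr 1
  funext i
  by_cases hi : (i : ℕ) = k
  · rw [show i = ⟨k, by omega⟩ from Fin.ext hi, Function.update_self]
  · rw [Function.update_of_ne (fun h => hi (congrArg Fin.val h)),
      twist_contract_insertMu_of_ne σ hkj a g i hi]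

lemma skewGroup_mu_insertMu_apply (hA : A.IsAInfty) (h : G) :
    (skewGroup K G A σ).mu (n - j + 1) ((skewGroup K G A σ).insertMu k j hkj a) h =
      ∑ g ∈ univ with ordProd G g = h, A.mu (n - j + 1) (A.insertMu k j hkj (twist σ g a)) := by
  rw [skewGroup_mu_apply, sum_filter, sum_filter, ← sum_fiberwise univ (contract k j hkj)]
  refine sum_congr rfl fun c _ => ?_
  have hfiber : ∀ g ∈ univ.filter (contract k j hkj · = c), ordProd G g = ordProd G c :=
    fun g hg => by rw [← (mem_filter.1 hg).2, ordProd_contract]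
  rw [mu_twist_insertMu σ hkj a hA]
  calc
    _ = ∑ g ∈ univ with contract k j hkj g = c,
          if ordProd G c = h then A.mu (n - j + 1) (A.insertMu k j hkj (twist σ g a)) else 0 := by
      rw [sum_ite_irrel, sum_const_zero]
    _ = _ := sum_congr rfl fun g hg => by rw [hfiber g hg]

end StasheffTerm

lemma skewGroup_stasheffSum_apply (hA : A.IsAInfty) {n : ℕ} (d : Fin n → ℤ)
    (a : Fin n → G → A.M) (h : G) :
    (skewGroup K G A σ).stasheffSum n d a h =
      ∑ g ∈ univ with ordProd G g = h, A.stasheffSum n d (twist σ g a) := by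
  simp only [stasheffSum, Finset.sum_apply, dite_apply, Pi.smul_apply]
  symm
  rw [sum_comm]
  refine sum_congr rfl fun k _ => ?_
  rw [sum_comm]
  refine sum_congr rfl fun j _ => ?_
  split_ifs with hc
  · rw [← smul_sum]
    exact congrArg _ (skewGroup_mu_insertMu_apply σ hc.2 a hA h).symm
  · exact sum_const_zero

lemma skewGroup_stasheff (hA : A.IsAInfty) (n : ℕ) (X : Fin (n + 1) → A.Obj) (d : Fin n → ℤ)
    (a : Fin n → G → A.M)
    (ha : ∀ i : Fin n, a i ∈ (skewGroup K G A σ).hom (X i.castSucc) (X i.succ) ⊓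
      (skewGroup K G A σ).grade (d i)) :
    (skewGroup K G A σ).stasheffSum n d a = 0 := by
  funext h
  rw [skewGroup_stasheffSum_apply σ hA]
  refine sum_eq_zero fun g _ => hA.stasheffSum_eq_zero (fun l => σ.obj (tailProd g l) (X l)) d _
    fun i => ⟨twist_mem_hom σ X a (fun i => (ha i).1) g i, ?_⟩
  exact σ.map_grade _ _ _ (Submodule.mem_pi.1 (ha i).2 (g i) trivial)

lemma skewGroup_unit_mem (hA : A.IsAInfty) (X : A.Obj) :
    (skewGroup K G A σ).unit X ∈ (skewGroup K G A σ).hom X X ⊓ (skewGroup K G A σ).grade 0 := by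
  refine ⟨Submodule.mem_pi.2 fun g _ => ?_, Submodule.mem_pi.2 fun g _ => ?_⟩ <;>
    dsimp only <;> split_ifs with hg
  · rw [hg, σ.obj_one]
    exact (hA.unit_mem X).1
  · exact zero_mem _
  · exact (hA.unit_mem X).2
  · exact zero_mem _

lemma twist_of_eq_unit {n : ℕ} (g : Fin n → G) (a : Fin n → G → A.M) (i : Fin n) (X : A.Obj)
    (hi : a i = (skewGroup K G A σ).unit X) :
    twist σ g a i = if g i = 1 then A.unit (σ.obj (suffixProd G g i) X) else 0 := by
  rw [twist, hi]
  split_ifs <;> simp [σ.map_unit, *]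

lemma skewGroup_mu_eq_zero_of_eq_unit (hA : A.IsAInfty) {n : ℕ} (hn : n ≠ 2)
    (a : Fin n → G → A.M) (i : Fin n) (X : A.Obj) (hi : a i = (skewGroup K G A σ).unit X) :
    (skewGroup K G A σ).mu n a = 0 := by
  funext h
  rw [skewGroup_mu_apply]
  refine sum_eq_zero fun g _ => ?_
  have hti := twist_of_eq_unit σ g a i X hi
  split_ifs at hti
  · exact hA.mu_eq_zero_of_eq_unit hn _ i _ hti
  · exact (hA.muMultilinear n).map_coord_zero i hti

lemma skewGroup_mu_two_unit_right (hA : A.IsAInfty) (X Y : A.Obj) (a : G → A.M)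
    (ha : a ∈ (skewGroup K G A σ).hom X Y) :
    (skewGroup K G A σ).mu 2 ![(skewGroup K G A σ).unit X, a] = a := by
  funext h
  rw [skewGroup_mu_apply, sum_eq_single_of_mem ![1, h] (by simp [ordProd_fin_two])]
  · simp only [twist_fin_two, Matrix.cons_val_zero, Matrix.cons_val_one, if_pos, σ.map_unit]
    exact hA.mu_two_unit_right _ _ _ (Submodule.mem_pi.1 ha h trivial)
  · intro g hg hne
    have hg0 : g 0 ≠ 1 := fun hg0 => hne <| by
      have hg1 := (mem_filter.1 hg).2
      rw [ordProd_fin_two, hg0, mul_one] at hg1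
      funext i
      fin_cases i <;> simp [hg0, hg1]
    rw [twist_fin_two]
    exact (hA.muMultilinear 2).map_coord_zero 0 (by simp [hg0])

lemma skewGroup_mu_two_unit_left (hA : A.IsAInfty) (X Y : A.Obj) (d : ℤ) (a : G → A.M)
    (ha : a ∈ (skewGroup K G A σ).hom X Y ⊓ (skewGroup K G A σ).grade d) :
    (skewGroup K G A σ).mu 2 ![a, (skewGroup K G A σ).unit Y] = ((-1 : K) ^ d) • a := by
  funext h
  rw [skewGroup_mu_apply, sum_eq_single_of_mem ![h, 1] (by simp [ordProd_fin_two])]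
  · simp only [twist_fin_two, Matrix.cons_val_zero, Matrix.cons_val_one, if_pos, σ.map_one]
    exact hA.mu_two_unit_left _ _ _ _
      ⟨Submodule.mem_pi.1 ha.1 h trivial, Submodule.mem_pi.1 ha.2 h trivial⟩
  · intro g hg hne
    have hg1 : g 1 ≠ 1 := fun hg1 => hne <| by
      have hg0 := (mem_filter.1 hg).2
      rw [ordProd_fin_two, hg1, one_mul] at hg0
      funext i
      fin_cases i <;> simp [hg0, hg1]
    rw [twist_fin_two]
    exact (hA.muMultilinear 2).map_coord_zero 1 (by simp [hg1])

end SkewGroup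

theorem skewGroup_isAInfty_general (K : Type) [Field K] (G : Type) [Group G] [Fintype G]
    [DecidableEq G]
    (A : AInftyData K) (hA : A.IsAInfty) (σ : StrictAction K G A) :
    (skewGroup K G A σ).IsAInfty ∧
      (∀ (X : A.Obj) (g : G),
        (skewGroup K G A σ).unit X g = if g = 1 then A.unit X else 0) :=
  ⟨{ mu_add := skewGroup_mu_add σ hA
     mu_smul := skewGroup_mu_smul σ hA
     mu_hom := skewGroup_mu_hom σ hA
     mu_grade := skewGroup_mu_grade σ hA
     stasheff := skewGroup_stasheff σ hA
     unit_mem := skewGroup_unit_mem σ hA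
     mu_one_unit X := skewGroup_mu_eq_zero_of_eq_unit σ hA (by decide) _ 0 X rfl
     mu_two_unit_right := skewGroup_mu_two_unit_right σ hA
     mu_two_unit_left := skewGroup_mu_two_unit_left σ hA
     mu_unit_vanish n hn a i X := skewGroup_mu_eq_zero_of_eq_unit σ hA (by omega) a i X },
    fun _ _ => rfl⟩

/-- If `A` is a strictly unital A∞-category over `K`, `G` is a finite group
whose order is invertible in `K`, acting strictly on `A`, then the skew-group category
`A * G` is again a strictly unital A∞-category (its multiplications are multilinear,
respect the hom and degree decompositions, satisfy the Stasheff relations, and the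
elements `1_X ⊗ 1_G` are strict units). -/
theorem skewGroup_isAInfty (K : Type) [Field K] (G : Type) [Group G] [Fintype G]
    [DecidableEq G] (hcard : (Fintype.card G : K) ≠ 0)
    (A : AInftyData K) (hA : A.IsAInfty) (σ : StrictAction K G A) :
    (skewGroup K G A σ).IsAInfty ∧
      (∀ (X : A.Obj) (g : G),
        (skewGroup K G A σ).unit X g = if g = 1 then A.unit X else 0) :=
  skewGroup_isAInfty_general K G A hA σ
end

section
/- Let A be a strictly unital A∞-category with a strict action of a finite group G whose order is invertible in the base field. Let F: add A → add(A*G) be the strict A∞-functor with F(X) = {X}, F(f) = f⊗1, and let H: add(A*G) → add A be the strict A∞-functor with H({X}) = ⊕_{g∈G} gX sending ∑_g a_g ⊗ g to the matrix (h a_{h⁻¹g})_{h,g∈G}. Then there are split natural transformations ε: HF → 1 (projection of ⊕_g gX onto the summand g = 1) and η: 1 → FH (the column vector of morphisms 1_{gX} ⊗ g : {X} → {gX}); in particular, in H⁰, every object {X} of A*G is a direct summand of FH({X}) and every object X of A is a direct summand of HF(X). -/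
/-!
STATEMENT 9: For a strictly unital A∞-category `A` with a strict action of a finite
group `G` of order invertible in `K`, the strict A∞-functors
`F : add A → add (A*G)`, `F(X) = {X}`, `F(f) = f ⊗ 1`, and
`H : add (A*G) → add A`, `H({X}) = ⊕_{g ∈ G} gX`, `H(∑ a_g ⊗ g) = (h·a_{h⁻¹g})_{h,g}`,
admit split natural transformations `ε : HF → 1` (projection of `⊕_g gX` onto the
summand `g = 1`) and `η : 1 → FH` (the column of morphisms `1_{gX} ⊗ g : {X} → {gX}`).
In particular, in `H⁰`, every object `{X}` of `A*G` is a direct summand of `FH({X})`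
and every object `X` of `A` is a direct summand of `HF(X)`.

Conventions as in the file for STATEMENT 0.  Morphisms into/out of the formal direct
sums `⊕_g gX` are recorded componentwise; `single g a` denotes the morphism `a ⊗ g`
of `A*G` whose only nonzero component is `a` in the `g`-slot.  The conclusions assert:
* the naturality squares for `ε` and `η` (as `H⁰`-compositions, with the Koszul sign
  `[a₂][a₁] = (-1)^{|a₁|} μ²(a₂,a₁)` accounted for);
* the splittings: the composite `X → HF(X) → X` (inclusion at `g = 1` followed by `ε_X`)
  is `1_X`, and the composite `{X} → FH({X}) → {X}` of `η_{X}` with the row vector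
  `(|G|⁻¹ · 1_{gX} ⊗ g⁻¹)_g` is the identity `1_X ⊗ 1_G`.
-/



set_option autoImplicit false

universe u v

/-- The morphism `a ⊗ g` of `A*G`: the function `G → A.M` supported at `g` with value
`a`. -/
def single {K : Type} [Field K] {G : Type} [Group G] [DecidableEq G]
    {A : AInftyData K} (g : G) (a : A.M) : G → A.M :=
  fun k => if k = g then a else 0


section Aux
variable {K : Type} [Field K] {G : Type} [Group G] [Fintype G] [DecidableEq G]

lemma mu_zero {A : AInftyData K} (hA : A.IsAInfty) (n : ℕ) (a : Fin n → A.M)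
    (i : Fin n) (h : a i = 0) : A.mu n a = 0 := by
  conv_lhs => rw [← Function.update_eq_self i a, h,
    show (0 : A.M) = (0 : K) • (0 : A.M) by simp, hA.mu_smul]
  simp

lemma ordProd_two (g₀ g₁ : G) : ordProd G ![g₀, g₁] = g₁ * g₀ := by
  simp [ordProd, List.ofFn_succ]

lemma suffixProd_two_zero (g₀ g₁ : G) : suffixProd G ![g₀, g₁] 0 = g₁ := by
  simp [suffixProd, List.ofFn_succ]

lemma suffixProd_two_one (g₀ g₁ : G) : suffixProd G ![g₀, g₁] 1 = 1 := by
  simp [suffixProd, List.ofFn_succ]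

lemma skew_mu2 {A : AInftyData K} (hA : A.IsAInfty) (σ : StrictAction K G A)
    (g₀ g₁ : G) (x y : A.M) :
    (skewGroup K G A σ).mu 2 ![single (A := A) g₀ x, single (A := A) g₁ y] =
      single (A := A) (g₁ * g₀) (A.mu 2 ![σ.map g₁ x, y]) := by
  funext h
  show (∑ γ : Fin 2 → G, if ordProd G γ = h then
      A.mu 2 (fun i => σ.map (suffixProd G γ i)
        ((![single (A := A) g₀ x, single (A := A) g₁ y]) i (γ i))) else 0) = _
  rw [Finset.sum_eq_single (![g₀, g₁])]
  · rw [ordProd_two]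
    have harg : (fun i => σ.map (suffixProd G ![g₀, g₁] i)
        ((![single (A := A) g₀ x, single (A := A) g₁ y]) i (![g₀, g₁] i))) =
        ![σ.map g₁ x, y] := by
      funext i
      fin_cases i
      · simp [suffixProd_two_zero, single]
      · simp [suffixProd_two_one, single, σ.map_one]
    rw [harg]
    show _ = if h = g₁ * g₀ then _ else 0
    rcases eq_or_ne h (g₁ * g₀) with h1 | h1
    · rw [if_pos h1.symm, if_pos h1]
    · rw [if_neg (Ne.symm h1), if_neg h1]
  · intro γ _ hne
    have : γ 0 ≠ g₀ ∨ γ 1 ≠ g₁ := by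
      by_contra hc
      push_neg at hc
      apply hne
      funext i
      fin_cases i
      · exact hc.1
      · exact hc.2
    rcases this with h0 | h1
    · rw [mu_zero hA 2 _ 0 (by simp [single, h0])]; simp
    · rw [mu_zero hA 2 _ 1 (by simp [single, h1])]; simp
  · intro h'; exact absurd (Finset.mem_univ _) h'

end Aux
/-- The functors `F` and `H` between `add A` and `add (A*G)` come with
split natural transformations `ε : HF → 1` and `η : 1 → FH`; in particular every object
of `A*G` is, in `H⁰`, a direct summand of `FH({X})`, and every object of `A` is a direct
summand of `HF(X)`. -/
theorem skewGroup_adjunction_split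
    (K : Type) [Field K] (G : Type) [Group G] [Fintype G] [DecidableEq G]
    (hcard : (Fintype.card G : K) ≠ 0)
    (A : AInftyData K) (hA : A.IsAInfty) (σ : StrictAction K G A) :
    letI B := skewGroup K G A σ
    -- `ε` is split: the composite of the inclusion of the summand `g = 1` into
    -- `HF(X) = ⊕_g gX` with the projection `ε_X` is the identity of `X`:
    (∀ X : A.Obj, A.mu 2 ![A.unit X, A.unit X] = A.unit X) ∧
    -- naturality of `ε` (componentwise, for a homogeneous `a : X → Y` of degree `d`):
    (∀ (X Y : A.Obj) (d : ℤ) (a : A.M), a ∈ A.hom X Y ⊓ A.grade d →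
      ((-1 : K) ^ d) • A.mu 2 ![a, A.unit Y] = A.mu 2 ![A.unit X, a]) ∧
    -- `η` is split: the composite of `η_X = (1_{gX} ⊗ g)_g : {X} → FH({X}) = ⊕_g {gX}`
    -- with the row vector `(|G|⁻¹ • 1_{gX} ⊗ g⁻¹)_g : FH({X}) → {X}` is `1_X ⊗ 1_G`:
    (∀ X : A.Obj,
      (∑ g : G, (Fintype.card G : K)⁻¹ •
          B.mu 2 ![single (A := A) g (A.unit (σ.obj g X)),
                   single (A := A) g⁻¹ (A.unit X)]) = B.unit X) ∧
    -- naturality of `η`: for every morphism `a ⊗ h₀ : {X} → {Y}` of `A*G` (with `a`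
    -- homogeneous of degree `d`) and every summand index `h : G`, the square commutes
    -- in `H⁰`:  `FH(a ⊗ h₀) ∘ η_X = η_Y ∘ (a ⊗ h₀)` componentwise:
    (∀ (X Y : A.Obj) (h₀ : G) (d : ℤ) (a : A.M),
      a ∈ A.hom (σ.obj h₀ X) Y ⊓ A.grade d → ∀ h : G,
      B.mu 2 ![single (A := A) (h * h₀) (A.unit (σ.obj (h * h₀) X)),
               single (A := A) 1 (σ.map h a)] =
        ((-1 : K) ^ d) •
          B.mu 2 ![single (A := A) h₀ a,
                   single (A := A) h (A.unit (σ.obj h Y))]) := by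
  have hunit := fun X => (hA.unit_mem X).1
  refine ⟨?_, ?_, ?_, ?_⟩
  · intro X
    exact hA.mu_two_unit_right X X (A.unit X) (hunit X)
  · intro X Y d a ha
    rw [hA.mu_two_unit_left X Y d a ha, hA.mu_two_unit_right X Y a ha.1,
      smul_smul]
    have hsq : ((-1 : K) ^ d) * ((-1 : K) ^ d) = 1 := by
      rcases Int.even_or_odd d with he | ho
      · rw [he.neg_one_zpow]; ring
      · rw [ho.neg_one_zpow]; ring
    rw [hsq, one_smul]
  · intro X
    have hterm : ∀ g : G,
        (skewGroup K G A σ).mu 2 ![single (A := A) g (A.unit (σ.obj g X)),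
                 single (A := A) g⁻¹ (A.unit X)] =
          single (A := A) 1 (A.unit X) := by
      intro g
      rw [skew_mu2 hA σ, σ.map_unit, ← σ.obj_mul, inv_mul_cancel, σ.obj_one,
        hA.mu_two_unit_right X X (A.unit X) (hunit X)]
    calc (∑ g : G, (Fintype.card G : K)⁻¹ •
            (skewGroup K G A σ).mu 2 ![single (A := A) g (A.unit (σ.obj g X)),
                     single (A := A) g⁻¹ (A.unit X)])
        = ∑ _g : G, (Fintype.card G : K)⁻¹ • single (A := A) 1 (A.unit X) :=
          Finset.sum_congr rfl (fun g _ => congrArg _ (hterm g))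
      _ = (skewGroup K G A σ).unit X := by
          rw [Finset.sum_const, Finset.card_univ, ← Nat.cast_smul_eq_nsmul K,
            smul_smul, mul_inv_cancel₀ hcard, one_smul]
          rfl
  · intro X Y h₀ d a ha h
    rw [skew_mu2 hA σ, skew_mu2 hA σ]
    simp only [σ.map_one, LinearMap.id_coe, id_eq, one_mul]
    have hha : σ.map h a ∈ A.hom (σ.obj (h * h₀) X) (σ.obj h Y) := by
      rw [σ.obj_mul]
      exact σ.map_hom h _ _ a ha.1
    rw [hA.mu_two_unit_right _ _ (σ.map h a) hha]
    have hhg : σ.map h a ∈ A.hom (σ.obj (h * h₀) X) (σ.obj h Y) ⊓ A.grade d :=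
      ⟨hha, σ.map_grade h d a ha.2⟩
    rw [hA.mu_two_unit_left _ _ d (σ.map h a) hhg]
    funext k
    simp only [single, Pi.smul_apply, smul_smul]
    have hsq : ((-1 : K) ^ d) * ((-1 : K) ^ d) = 1 := by
      rcases Int.even_or_odd d with he | ho
      · rw [he.neg_one_zpow]; ring
      · rw [ho.neg_one_zpow]; ring
    split_ifs
    · rw [smul_smul, hsq, one_smul]
    · rw [smul_zero]
end
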